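/- arXiv:2309.13517 — 2 statements merged into one kernel-verified Lean document; each statement's English description precedes it below -/
import Mathlib

section
/- Any rectangle R ⊆ ({0,1}^n)^k satisfying |R ∩ D_0| ≥ 2^{-n/k} · |D_0| must intersect D_*. Equivalently, every 0-monochromatic rectangle R for k-party unique disjointness satisfies |R ∩ D_0| < 2^{-n/k} · (k+1)^n. -/
/-- 'no' instances of k-party unique disjointness on n coordinates. -/
def D0 (n k : ℕ) : Set (Fin k → Fin n → Bool) :=
  {x | ∀ i : Fin n, (∑ j, if x j i then 1 else 0) ≤ 1}

/-- 'yes' instances of k-party unique disjointness on n coordinates. -/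
def Dstar (n k : ℕ) : Set (Fin k → Fin n → Bool) :=
  {x | ∃ ℓ : Fin n, (∀ j, x j ℓ = true) ∧
    ∀ i ≠ ℓ, (∑ j, if x j i then 1 else 0) ≤ 1}

/-- Combinatorial rectangle X_1 × ... × X_k. -/
def Rect {n k : ℕ} (X : Fin k → Set (Fin n → Bool)) : Set (Fin k → Fin n → Bool) :=
  {x | ∀ j, x j ∈ X j}

/-!
Induct on `n`, peeling off the last coordinate. Let `Y` and `S` be the slices of `X` at last bit
`0` and `1`. A point of `D0` has at most one `1` in its last column, so `Rect X ∩ D0` splits into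
`R₀ = Rect Y ∩ D0`, extended by the zero column, and the sets `R j = Rect (Y[j := S j]) ∩ D0`,
extended by the unit column at `j`. Each rectangle `Y[j := Y j ∪ S j]` still avoids `D_*`, so by
induction `|R₀ ∪ R j| ≤ k ^ n`. No point of `R₀` lies in every `R j`, since extending it by the
all-ones column would give a point of `D_*` in `Rect X`; hence `|R₀| + ∑ |R₀ ∩ R j| ≤ k |R₀|`, and
inclusion–exclusion yields `|Rect X ∩ D0| ≤ k ^ (n + 1)`. Finally `k ^ n < 2 ^ (-n/k) (k + 1) ^ n`
because `2 < (1 + 1/k) ^ k`.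
-/

open Set Function

namespace Set

theorem ncard_add_sum_ncard_inter_le {α ι : Type*} [Finite α] [Fintype ι] {C : Set α}
    {W : ι → Set α} (hcover : ∀ x ∈ C, ∃ i, x ∉ W i) :
    C.ncard + ∑ i, (C ∩ W i).ncard ≤ Fintype.card ι * C.ncard := by
  have hsub : C ⊆ ⋃ i, C \ W i := fun x hx => by
    obtain ⟨i, hi⟩ := hcover x hx
    exact mem_iUnion.2 ⟨i, hx, hi⟩
  have hsplit : ∑ i, ((C ∩ W i).ncard + (C \ W i).ncard) = Fintype.card ι * C.ncard := by
    simp only [fun i => ncard_inter_add_ncard_sdiff_eq_ncard C (W i), Finset.sum_const,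
      Finset.card_univ, smul_eq_mul]
  calc C.ncard + ∑ i, (C ∩ W i).ncard
      ≤ ∑ i, (C \ W i).ncard + ∑ i, (C ∩ W i).ncard :=
        Nat.add_le_add_right ((ncard_le_ncard hsub).trans (ncard_iUnion_le_of_fintype _)) _
    _ = Fintype.card ι * C.ncard := by rw [← hsplit, Finset.sum_add_distrib, add_comm]

end Set

theorem Real.two_rpow_inv_lt_one_add_inv {x : ℝ} (hx : 1 < x) : (2 : ℝ) ^ x⁻¹ < 1 + x⁻¹ := by
  have hx0 : 0 < x := zero_lt_one.trans hx
  rw [Real.rpow_inv_lt_iff_of_pos zero_le_two (by positivity) hx0]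
  have := one_add_mul_self_lt_rpow_one_add (s := x⁻¹) (by linarith [inv_pos.2 hx0])
    (inv_ne_zero hx0.ne') hx
  rwa [mul_inv_cancel₀ hx0.ne', one_add_one_eq_two] at this

theorem pow_lt_two_rpow_neg_div_mul_succ_pow {n k : ℕ} (hk : 2 ≤ k) (hn : 1 ≤ n) :
    (k : ℝ) ^ n < 2 ^ (-(n : ℝ) / k) * (k + 1) ^ n := by
  have hk0 : (0 : ℝ) < k := by positivity
  have hroot : (k : ℝ) * 2 ^ (k : ℝ)⁻¹ < k + 1 := by
    calc (k : ℝ) * 2 ^ (k : ℝ)⁻¹ < k * (1 + (k : ℝ)⁻¹) :=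
          mul_lt_mul_of_pos_left (Real.two_rpow_inv_lt_one_add_inv (by exact_mod_cast hk)) hk0
      _ = k + 1 := by field_simp
  have hexp : (2 : ℝ) ^ (-(n : ℝ) / k) = ((2 ^ (k : ℝ)⁻¹) ^ n)⁻¹ := by
    rw [neg_div, Real.rpow_neg zero_le_two, div_eq_inv_mul, Real.rpow_mul zero_le_two,
      Real.rpow_natCast]
  rw [hexp, inv_mul_eq_div, lt_div_iff₀ (by positivity), ← mul_pow]
  exact pow_lt_pow_left₀ hroot (by positivity) (by omega)

section Combinatorics

variable {n k : ℕ}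

theorem rect_update_union (X : Fin k → Set (Fin n → Bool)) (j : Fin k) (S T : Set (Fin n → Bool)) :
    Rect (update X j (S ∪ T)) = Rect (update X j S) ∪ Rect (update X j T) := by
  have hpi (Z : Fin k → Set (Fin n → Bool)) : Rect Z = univ.pi Z := by ext; simp [Rect]
  simp only [hpi, pi_update_of_mem (t := fun _ s => s) (mem_univ j), mem_union, ofPred_or,
    union_inter_distrib_right]

def unitCol (o : Option (Fin k)) : Fin k → Bool := fun j => decide (o = some j)

theorem unitCol_injective : Injective (unitCol (k := k)) := by
  intro o₁ o₂ h
  cases o₁ <;> cases o₂ <;> simp_all [funext_iff, unitCol]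

theorem sum_unitCol_le_one (o : Option (Fin k)) : (∑ j, if unitCol o j then 1 else 0) ≤ 1 := by
  cases o <;> simp [unitCol]

theorem exists_unitCol_eq {c : Fin k → Bool} (hc : (∑ j, if c j then 1 else 0) ≤ 1) :
    ∃ o, unitCol o = c := by
  rw [Finset.sum_boole, Nat.cast_id, Finset.card_le_one] at hc
  by_cases h : ∃ j, c j
  · obtain ⟨j, hj⟩ := h
    refine ⟨some j, funext fun j' => ?_⟩
    by_cases hj' : c j'
    · simp [unitCol, hc j (by simpa using hj) j' (by simpa using hj'), hj']
    · have hne : j ≠ j' := by rintro rfl; exact hj' hj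
      simp [unitCol, hne, hj']
  · exact ⟨none, funext fun j => by simp_all [unitCol]⟩

def appendCol (c : Fin k → Bool) (y : Fin k → Fin n → Bool) : Fin k → Fin (n + 1) → Bool :=
  fun j => Fin.snoc (y j) (c j)

def sliceLast (X : Fin k → Set (Fin (n + 1) → Bool)) (c : Fin k → Bool) :
    Fin k → Set (Fin n → Bool) :=
  fun j => {y | Fin.snoc y (c j) ∈ X j}

theorem appendCol_injective (c : Fin k → Bool) : Injective (appendCol (n := n) c) :=
  fun y₁ y₂ h => funext fun j => by simpa [appendCol] using congrFun h j

theorem appendCol_last_init (z : Fin k → Fin (n + 1) → Bool) :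
    appendCol (fun j => z j (Fin.last n)) (fun j => Fin.init (z j)) = z :=
  funext fun j => Fin.snoc_init_self (z j)

theorem appendCol_mem_D0_iff {c : Fin k → Bool} {y : Fin k → Fin n → Bool} :
    appendCol c y ∈ D0 (n + 1) k ↔ y ∈ D0 n k ∧ (∑ j, if c j then 1 else 0) ≤ 1 := by
  simp [D0, appendCol, Fin.forall_fin_succ']

theorem appendCol_mem_Dstar {c : Fin k → Bool} {y : Fin k → Fin n → Bool} (hy : y ∈ Dstar n k)
    (hc : (∑ j, if c j then 1 else 0) ≤ 1) : appendCol c y ∈ Dstar (n + 1) k := by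
  obtain ⟨ℓ, hℓ, hrest⟩ := hy
  refine ⟨ℓ.castSucc, by simpa [appendCol] using hℓ, Fin.lastCases (fun _ => ?_) fun i hi => ?_⟩
  · simpa [appendCol] using hc
  · simpa [appendCol] using hrest i (by simpa using hi)

theorem appendCol_true_mem_Dstar {y : Fin k → Fin n → Bool} (hy : y ∈ D0 n k) :
    appendCol (fun _ => true) y ∈ Dstar (n + 1) k := by
  refine ⟨Fin.last n, by simp [appendCol], Fin.lastCases (fun h => absurd rfl h) fun i _ => ?_⟩
  simpa [appendCol] using hy i

theorem sliceLast_unitCol_some (X : Fin k → Set (Fin (n + 1) → Bool)) (j : Fin k) :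
    sliceLast X (unitCol (some j)) =
      update (sliceLast X (unitCol none)) j (sliceLast X (fun _ => true) j) := by
  funext j'
  rcases eq_or_ne j' j with rfl | hj'
  · simp [sliceLast, unitCol]
  · simp [sliceLast, unitCol, hj', Ne.symm hj']

theorem rect_sliceLast_inter_Dstar {X : Fin k → Set (Fin (n + 1) → Bool)}
    (hX : Rect X ∩ Dstar (n + 1) k = ∅) {c : Fin k → Bool}
    (hc : (∑ j, if c j then 1 else 0) ≤ 1) : Rect (sliceLast X c) ∩ Dstar n k = ∅ :=
  eq_empty_of_forall_notMem fun _ ⟨hyR, hyD⟩ => hX.subset ⟨hyR, appendCol_mem_Dstar hyD hc⟩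

theorem rect_sliceLast_true_inter_D0 {X : Fin k → Set (Fin (n + 1) → Bool)}
    (hX : Rect X ∩ Dstar (n + 1) k = ∅) : Rect (sliceLast X fun _ => true) ∩ D0 n k = ∅ :=
  eq_empty_of_forall_notMem fun _ ⟨hyR, hyD⟩ => hX.subset ⟨hyR, appendCol_true_mem_Dstar hyD⟩

theorem rect_inter_D0_succ_eq_iUnion (X : Fin k → Set (Fin (n + 1) → Bool)) :
    Rect X ∩ D0 (n + 1) k =
      ⋃ o, appendCol (unitCol o) '' (Rect (sliceLast X (unitCol o)) ∩ D0 n k) := by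
  ext z
  simp only [mem_iUnion, mem_image]
  constructor
  · rintro ⟨hzR, hzD⟩
    rw [← appendCol_last_init z] at hzR hzD ⊢
    obtain ⟨hy, hc⟩ := appendCol_mem_D0_iff.1 hzD
    obtain ⟨o, ho⟩ := exists_unitCol_eq hc
    rw [← ho] at hzR ⊢
    exact ⟨o, _, ⟨hzR, hy⟩, rfl⟩
  · rintro ⟨o, y, ⟨hyR, hyD⟩, rfl⟩
    exact ⟨hyR, appendCol_mem_D0_iff.2 ⟨hyD, sum_unitCol_le_one o⟩⟩

theorem ncard_rect_inter_D0_succ (X : Fin k → Set (Fin (n + 1) → Bool)) :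
    (Rect X ∩ D0 (n + 1) k).ncard =
      ∑ o, (Rect (sliceLast X (unitCol o)) ∩ D0 n k).ncard := by
  have hdisj : Pairwise (Disjoint on fun o =>
      appendCol (unitCol o) '' (Rect (sliceLast X (unitCol o)) ∩ D0 n k)) := by
    intro o₁ o₂ hne
    refine disjoint_left.2 ?_
    rintro _ ⟨y₁, -, rfl⟩ ⟨y₂, -, h⟩
    refine hne (unitCol_injective (funext fun j => ?_))
    simpa [appendCol] using (congrFun (congrFun h j) (Fin.last n)).symm
  rw [rect_inter_D0_succ_eq_iUnion, ncard_iUnion_of_finite (fun _ => toFinite _) hdisj,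
    finsum_eq_sum_of_fintype]
  simp only [ncard_image_of_injective _ (appendCol_injective _)]

theorem ncard_rect_inter_D0_succ_le {m : ℕ}
    (hm : ∀ Y : Fin k → Set (Fin n → Bool), Rect Y ∩ Dstar n k = ∅ → (Rect Y ∩ D0 n k).ncard ≤ m)
    (X : Fin k → Set (Fin (n + 1) → Bool)) (hX : Rect X ∩ Dstar (n + 1) k = ∅) :
    (Rect X ∩ D0 (n + 1) k).ncard ≤ k * m := by
  set Y := sliceLast X (unitCol none)
  set S := sliceLast X fun _ => true
  set R₀ := Rect Y ∩ D0 n k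
  set R : Fin k → Set (Fin k → Fin n → Bool) := fun j => Rect (update Y j (S j)) ∩ D0 n k
  have hdecomp : (Rect X ∩ D0 (n + 1) k).ncard = R₀.ncard + ∑ j, (R j).ncard := by
    simp only [ncard_rect_inter_D0_succ, Fintype.sum_option, sliceLast_unitCol_some, R₀, R, Y, S]
  have hunion (j : Fin k) : (R₀ ∪ R j).ncard ≤ m := by
    have hrect : Rect (update Y j (Y j ∪ S j)) = Rect Y ∪ Rect (update Y j (S j)) := by
      rw [rect_update_union, update_eq_self]
    have hY := rect_sliceLast_inter_Dstar hX (sum_unitCol_le_one none)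
    have hYS := rect_sliceLast_inter_Dstar hX (sum_unitCol_le_one (some j))
    rw [sliceLast_unitCol_some] at hYS
    have hfree : Rect (update Y j (Y j ∪ S j)) ∩ Dstar n k = ∅ := by
      rw [hrect, union_inter_distrib_right, hY, hYS, union_empty]
    simpa only [hrect, union_inter_distrib_right] using hm _ hfree
  have hcover : ∀ z ∈ R₀, ∃ j, z ∉ R j := by
    intro z hz
    by_contra! hall
    refine (rect_sliceLast_true_inter_D0 hX).subset ⟨fun j => ?_, hz.2⟩
    simpa using (hall j).1 j
  have hoverlap := ncard_add_sum_ncard_inter_le hcover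
  have hmod (j : Fin k) := ncard_union_add_ncard_inter R₀ (R j)
  have hsum := Finset.sum_le_sum fun j (_ : j ∈ Finset.univ) => hunion j
  simp only [Finset.sum_const, Finset.card_univ, Fintype.card_fin, smul_eq_mul] at hsum hoverlap
  have hmod_sum := Finset.sum_congr rfl fun j (_ : j ∈ Finset.univ) => hmod j
  simp only [Finset.sum_add_distrib, Finset.sum_const, Finset.card_univ, Fintype.card_fin,
    smul_eq_mul] at hmod_sum
  omega

theorem ncard_rect_inter_D0_le_pow (X : Fin k → Set (Fin n → Bool))
    (hX : Rect X ∩ Dstar n k = ∅) : (Rect X ∩ D0 n k).ncard ≤ k ^ n := by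
  induction n with
  | zero => simpa using ncard_le_one_of_subsingleton (Rect X ∩ D0 0 k)
  | succ n ih =>
    rw [pow_succ']
    exact ncard_rect_inter_D0_succ_le ih X hX

end Combinatorics

/-- Structure theorem: every rectangle disjoint from the 'yes' instances contains fewer
    than a 2^{-n/k} fraction of the (k+1)^n 'no' instances. Equivalently, any rectangle
    with |R ∩ D_0| ≥ 2^{-n/k}·|D_0| must intersect D_*. -/
theorem large_rectangle_not_monochromatic {n k : ℕ} (hk : 2 ≤ k) (hn : 1 ≤ n)
    (X : Fin k → Set (Fin n → Bool))
    (h : Rect X ∩ Dstar n k = ∅) :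
    (Set.ncard (Rect X ∩ D0 n k) : ℝ) < 2 ^ (-(n : ℝ) / k) * (k + 1) ^ n :=
  calc (Set.ncard (Rect X ∩ D0 n k) : ℝ) ≤ (k : ℝ) ^ n := by
        exact_mod_cast ncard_rect_inter_D0_le_pow X h
    _ < 2 ^ (-(n : ℝ) / k) * (k + 1) ^ n := pow_lt_two_rpow_neg_div_mul_succ_pow hk hn
end

section
/- For any deterministic communication protocol C with at most c bits of communication for k-party unique disjointness on n coordinates that correctly outputs 0 on all inputs in D_0 and 1 on all inputs in D_*, we have c ≥ n/k. More precisely: if the input domain ({0,1}^n)^k is partitioned into at most 2^c rectangles, each entirely contained in D_0^complement-of-D_* classes (each rectangle is monochromatic: disjoint from D_0 or disjoint from D_*), then 2^c ≥ 2^{n/k}, i.e., c ≥ n/k. -/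
/-!
Encode an element of `D_0` by the map `f : Fin n → Option (Fin k)` sending each coordinate to the
player holding it, if any; so `|D_0| = (k+1)^n`. A rectangle `R` disjoint from `D_*` contains at
most `k^n` elements of `D_0`, by induction on `n`. Split the elements `f` of `R ∩ D_0` by the value
`v = f 0` into slices `A_v` of tails. A tail cannot lie in every slice `A_(some j)`: otherwise
giving each player `j` its input from the witness for `A_(some j)` produces an element of
`R ∩ D_*` in which all players hold coordinate `0`. Hence `|A_none| ≤ ∑_j |A_none \ A_(some j)|`,
and `A_none ∪ A_(some j)` lies in the rectangle of tails of inputs of `R` in which only player `j`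
may hold coordinate `0`, which is again disjoint from `D_*`. So `m` rectangles covering `D_0`
give `(k+1)^n ≤ m k^n ≤ 2^c k^n`, and Bernoulli's `2 k^k ≤ (k+1)^k` turns this into `n ≤ c k`.
-/

open Finset

lemma two_mul_pow_self_le_succ_pow (k : ℕ) (hk : k ≠ 0) : 2 * k ^ k ≤ (k + 1) ^ k := by
  have := pow_add_mul_le_add_pow (a := k) (b := 1) (Nat.zero_le _) (by positivity) k
  rwa [Nat.cast_id, mul_one, mul_pow_sub_one hk, ← two_mul] at this

lemma sum_boole_le_one_iff {ι : Type*} [Fintype ι] (p : ι → Bool) :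
    (∑ j, if p j then 1 else 0) ≤ 1 ↔ {j | p j}.Subsingleton := by
  classical
  rw [sum_boole, Nat.cast_id, card_le_one]
  simp [Set.Subsingleton]

lemma card_filter_fun_fin_succ {α : Type*} [Fintype α] {n : ℕ} (P : (Fin (n + 1) → α) → Prop)
    [DecidablePred P] : #{f | P f} = ∑ v, #{g | P (Fin.cons v g)} := by
  simp only [card_filter]
  rw [← (Fin.consEquiv fun _ => α).sum_comp, Fintype.sum_prod_type]
  rfl

section

variable {n k : ℕ}

lemma mem_D0_iff {x : Fin k → Fin n → Bool} :
    x ∈ D0 n k ↔ ∀ i, {j | x j i}.Subsingleton := by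
  simp only [D0, Set.mem_ofPred_eq, sum_boole_le_one_iff]

lemma mem_Dstar_iff {x : Fin k → Fin n → Bool} :
    x ∈ Dstar n k ↔ ∃ ℓ, (∀ j, x j ℓ) ∧ ∀ i ≠ ℓ, {j | x j i}.Subsingleton := by
  simp only [Dstar, Set.mem_ofPred_eq, sum_boole_le_one_iff]

def inputOf (f : Fin n → Option (Fin k)) : Fin k → Fin n → Bool :=
  fun j i => f i = some j

lemma inputOf_mem_D0 (f : Fin n → Option (Fin k)) : inputOf f ∈ D0 n k := by
  refine mem_D0_iff.2 fun i a ha b hb => ?_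
  simp_all [inputOf]

lemma inputOf_cons (v : Option (Fin k)) (f : Fin n → Option (Fin k)) (j : Fin k) :
    inputOf (Fin.cons v f : Fin (n + 1) → Option (Fin k)) j =
      Fin.cons (decide (v = some j)) (inputOf f j) := by
  funext i
  cases i using Fin.cases <;> rfl

def tailRect (X : Fin k → Set (Fin (n + 1) → Bool)) (j : Fin k) : Fin k → Set (Fin n → Bool) :=
  fun m => {y | ∃ b, Fin.cons b y ∈ X m ∧ (b = true → m = j)}

lemma tailRect_inter_Dstar {X : Fin k → Set (Fin (n + 1) → Bool)}
    (hX : Rect X ∩ Dstar (n + 1) k = ∅) (j : Fin k) :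
    Rect (tailRect X j) ∩ Dstar n k = ∅ := by
  refine Set.eq_empty_iff_forall_notMem.2 fun w ⟨hw, hwD⟩ => ?_
  choose b hbX hbj using hw
  obtain ⟨ℓ, hℓ, hsub⟩ := mem_Dstar_iff.1 hwD
  have hlift : (fun m => (Fin.cons (b m) (w m) : Fin (n + 1) → Bool)) ∈ Dstar (n + 1) k := by
    refine mem_Dstar_iff.2 ⟨ℓ.succ, fun m => hℓ m, fun i hi => ?_⟩
    cases i using Fin.cases with
    | zero => exact fun a ha c hc => (hbj a ha).trans (hbj c hc).symm
    | succ i => exact hsub i (fun h => hi (h ▸ rfl))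
  exact Set.eq_empty_iff_forall_notMem.1 hX _ ⟨hbX, hlift⟩

lemma inputOf_mem_tailRect {X : Fin k → Set (Fin (n + 1) → Bool)} {j : Fin k}
    {v : Option (Fin k)} (hv : ∀ m, v = some m → m = j) {g : Fin n → Option (Fin k)}
    (hg : inputOf (Fin.cons v g : Fin (n + 1) → Option (Fin k)) ∈ Rect X) :
    inputOf g ∈ Rect (tailRect X j) := fun m =>
  ⟨_, inputOf_cons v g m ▸ hg m, fun h => hv m (of_decide_eq_true h)⟩

lemma exists_inputOf_cons_some_notMem {X : Fin k → Set (Fin (n + 1) → Bool)}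
    (hX : Rect X ∩ Dstar (n + 1) k = ∅) (g : Fin n → Option (Fin k)) :
    ∃ j, inputOf (Fin.cons (some j) g : Fin (n + 1) → Option (Fin k)) ∉ Rect X := by
  by_contra! hall
  set w : Fin k → Fin (n + 1) → Bool := fun m => Fin.cons true (inputOf g m)
  have hwX : w ∈ Rect X := fun m => by simpa [w, inputOf_cons] using hall m m
  have hwD : w ∈ Dstar (n + 1) k := by
    refine mem_Dstar_iff.2 ⟨0, fun m => rfl, fun i hi => ?_⟩
    cases i using Fin.cases with
    | zero => exact absurd rfl hi
    | succ i => exact mem_D0_iff.1 (inputOf_mem_D0 g) i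
  exact Set.eq_empty_iff_forall_notMem.1 hX w ⟨hwX, hwD⟩

open Classical in
noncomputable def rectAssignments (X : Fin k → Set (Fin n → Bool)) :
    Finset (Fin n → Option (Fin k)) :=
  {f | inputOf f ∈ Rect X}

theorem card_rectAssignments_le (X : Fin k → Set (Fin n → Bool))
    (hX : Rect X ∩ Dstar n k = ∅) : #(rectAssignments X) ≤ k ^ n := by
  induction n with
  | zero => simpa using card_le_univ (rectAssignments X)
  | succ n ih =>
    classical
    set A : Option (Fin k) → Finset (Fin n → Option (Fin k)) := fun v =>
      {g | inputOf (Fin.cons v g : Fin (n + 1) → Option (Fin k)) ∈ Rect X}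
    have hsplit : #(rectAssignments X) = #(A none) + ∑ j, #(A (some j)) := by
      rw [rectAssignments, card_filter_fun_fin_succ, Fintype.sum_option]
    have hnone : #(A none) ≤ ∑ j, #(A none \ A (some j)) := by
      refine (card_le_card fun g hg => ?_).trans card_biUnion_le
      obtain ⟨j, hj⟩ := exists_inputOf_cons_some_notMem hX g
      simp only [A, mem_biUnion, mem_sdiff, mem_filter_univ] at hg ⊢
      exact ⟨j, mem_univ j, hg, hj⟩
    have hunion : ∀ j, A none ∪ A (some j) ⊆ rectAssignments (tailRect X j) := by
      intro j g hg
      simp only [rectAssignments, A, mem_union, mem_filter_univ] at hg ⊢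
      rcases hg with hg | hg <;> exact inputOf_mem_tailRect (by simp) hg
    calc #(rectAssignments X)
        ≤ ∑ j, (#(A none \ A (some j)) + #(A (some j))) := by
          rw [hsplit, sum_add_distrib]; gcongr
      _ = ∑ j, #(A none ∪ A (some j)) := by simp only [card_sdiff_add_card]
      _ ≤ ∑ j : Fin k, k ^ n := by
          gcongr with j
          exact (card_le_card (hunion j)).trans (ih _ (tailRect_inter_Dstar hX j))
      _ = k ^ (n + 1) := by simp [pow_succ']

lemma rectAssignments_eq_empty {X : Fin k → Set (Fin n → Bool)}
    (hX : Rect X ∩ D0 n k = ∅) : rectAssignments X = ∅ := by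
  refine eq_empty_of_forall_notMem fun f hf => ?_
  simp only [rectAssignments, mem_filter_univ] at hf
  exact Set.eq_empty_iff_forall_notMem.1 hX _ ⟨hf, inputOf_mem_D0 f⟩

end

theorem succ_pow_le_mul_pow_of_cover {n k m : ℕ} (X : Fin m → Fin k → Set (Fin n → Bool))
    (hcover : ∀ x ∈ D0 n k, ∃ t, x ∈ Rect (X t))
    (hmono : ∀ t, Rect (X t) ∩ D0 n k = ∅ ∨ Rect (X t) ∩ Dstar n k = ∅) :
    (k + 1) ^ n ≤ m * k ^ n := by
  classical
  calc (k + 1) ^ n = #(univ : Finset (Fin n → Option (Fin k))) := by simp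
    _ ≤ #(univ.biUnion fun t => rectAssignments (X t)) := by
        refine card_le_card fun f _ => ?_
        obtain ⟨t, ht⟩ := hcover _ (inputOf_mem_D0 f)
        simpa [rectAssignments] using ⟨t, ht⟩
    _ ≤ ∑ t, #(rectAssignments (X t)) := card_biUnion_le
    _ ≤ ∑ _t : Fin m, k ^ n := by
        gcongr with t
        rcases hmono t with hD0 | hDstar
        · simp [rectAssignments_eq_empty hD0]
        · exact card_rectAssignments_le _ hDstar
    _ = m * k ^ n := by simp

lemma le_mul_of_succ_pow_le_two_pow_mul_pow {n k c : ℕ} (hk : k ≠ 0)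
    (h : (k + 1) ^ n ≤ 2 ^ c * k ^ n) : n ≤ c * k := by
  have key : 2 ^ n * k ^ (k * n) ≤ 2 ^ (c * k) * k ^ (k * n) :=
    calc 2 ^ n * k ^ (k * n) = (2 * k ^ k) ^ n := by rw [mul_pow, pow_mul]
      _ ≤ ((k + 1) ^ k) ^ n := by gcongr; exact two_mul_pow_self_le_succ_pow k hk
      _ = ((k + 1) ^ n) ^ k := by rw [← pow_mul, ← pow_mul, mul_comm]
      _ ≤ (2 ^ c * k ^ n) ^ k := by gcongr
      _ = 2 ^ (c * k) * k ^ (k * n) := by rw [mul_pow, ← pow_mul, ← pow_mul, mul_comm n]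
  exact (Nat.pow_le_pow_iff_right (by norm_num)).1
    (Nat.le_of_mul_le_mul_right key (by positivity))

theorem deterministic_lower_bound_general {n k c m : ℕ}
    (X : Fin m → Fin k → Set (Fin n → Bool))
    (hcover : ∀ x : Fin k → Fin n → Bool, ∃ t : Fin m, x ∈ Rect (X t))
    (hmono : ∀ t : Fin m, Rect (X t) ∩ D0 n k = ∅ ∨ Rect (X t) ∩ Dstar n k = ∅)
    (hm : m ≤ 2 ^ c) :
    (n : ℝ) / k ≤ (c : ℝ) := by
  rcases Nat.eq_zero_or_pos k with rfl | hk
  · simp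
  have hcount := succ_pow_le_mul_pow_of_cover X (fun x _ => hcover x) hmono
  have hnck : n ≤ c * k :=
    le_mul_of_succ_pow_le_two_pow_mul_pow hk.ne' (hcount.trans (Nat.mul_le_mul_right _ hm))
  rw [div_le_iff₀ (by positivity)]
  exact_mod_cast hnck

/-- Deterministic lower bound: if the input domain is covered by at most 2^c rectangles,
    each monochromatic (disjoint from D_0 or from D_*), then c ≥ n/k. -/
theorem deterministic_lower_bound {n k c m : ℕ} (hk : 2 ≤ k) (hn : 1 ≤ n)
    (X : Fin m → Fin k → Set (Fin n → Bool))
    (hcover : ∀ x : Fin k → Fin n → Bool, ∃ t : Fin m, x ∈ Rect (X t))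
    (hmono : ∀ t : Fin m, Rect (X t) ∩ D0 n k = ∅ ∨ Rect (X t) ∩ Dstar n k = ∅)
    (hm : m ≤ 2 ^ c) :
    (n : ℝ) / k ≤ (c : ℝ) :=
  deterministic_lower_bound_general X hcover hmono hm
end
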